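/- Let M be a finite ordered monoid, let φ : A* → M be a surjective monoid morphism from the free monoid over a finite alphabet A, and let 𝓛 = { φ⁻¹(U) : U an upper set of M }. If L = φ⁻¹(P) for some subset P of M such that every P-chain in M has length at most n, then L ∈ Bₙ(𝓛). Moreover, for each k ≥ 1 the set U_k of all s ∈ M admitting a P-chain of length at least k ending at s is an upper set of M, and P = U₁ − U₂ + ⋯ ± Uₙ. -/
import Mathlib


/-- The alternating difference `(X₁ ∖ X₂) ∪ (X₃ ∖ X₄) ∪ ⋯` of a (decreasing,
eventually empty) chain of sets, indexed from `0` (so `X i` is `X_{i+1}`). -/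
def altDiff {E : Type*} (X : ℕ → Set E) : Set E :=
  ⋃ k, X (2 * k) \ X (2 * k + 1)

/-- The `n`-th level `Bₙ(𝓛)` of the difference hierarchy over `𝓛`. -/
def diffHier {E : Type*} (F : Set (Set E)) (n : ℕ) : Set (Set E) :=
  {S | ∃ X : ℕ → Set E, (∀ i, i < n → X i ∈ F) ∧ (∀ i, n ≤ i → X i = ∅) ∧
    (∀ i j, i ≤ j → X j ⊆ X i) ∧ S = altDiff X}

/-- The partial alternating combination `U₁ − U₂ + ⋯ ± U_j` (indexed from `0`). -/
def partialAlt {E : Type*} (F : ℕ → Set E) : ℕ → Set E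
  | 0 => ∅
  | j + 1 => if Even j then partialAlt F j ∪ F j else partialAlt F j \ F j

/-- A `P`-chain of length `m`: a strictly increasing sequence
`x₀ < x₁ < ⋯ < x_{m−1}` with `x₀ ∈ P` and the `x_i` alternately in `P` and out
of `P`. -/
def PChain {M : Type*} [Preorder M] (P : Set M) (x : ℕ → M) (m : ℕ) : Prop :=
  0 < m ∧ (∀ i, i + 1 < m → x i < x (i + 1)) ∧ x 0 ∈ P ∧
  ∀ i, 0 < i → i < m → (x i ∈ P ↔ x (i - 1) ∉ P)

lemma pchain_parity {M : Type*} [Preorder M] {P : Set M} {x : ℕ → M} {m : ℕ}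
    (h : PChain P x m) : ∀ i, i < m → (x i ∈ P ↔ Even i) := by
  intro i
  induction i with
  | zero => intro _; simpa using h.2.2.1
  | succ i ih =>
    intro him
    have h1 := h.2.2.2 (i + 1) (Nat.succ_pos i) him
    simp only [Nat.add_sub_cancel] at h1
    rw [h1, Nat.even_add_one]
    exact not_congr (ih (Nat.lt_of_succ_lt him))

/-- Let `M` be a finite ordered monoid, `φ : A* → M` a surjective morphism and
`𝓛` the class of preimages of upper sets of `M`. If `L = φ⁻¹(P)` where every
`P`-chain has length at most `n`, then `L ∈ Bₙ(𝓛)`; moreover each set `U_k` of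
elements at which some `P`-chain of length `≥ k` ends is an upper set, and
`P = U₁ − U₂ + ⋯ ± Uₙ`. -/
theorem mem_diffHier_of_chains_le {A M : Type*} [Fintype A] [Monoid M] [Fintype M]
    [PartialOrder M] [CovariantClass M M (· * ·) (· ≤ ·)]
    [CovariantClass M M (Function.swap (· * ·)) (· ≤ ·)]
    (φ : FreeMonoid A →* M) (hφ : Function.Surjective φ)
    (P : Set M) (n : ℕ) (hn : ∀ (x : ℕ → M) (m : ℕ), PChain P x m → m ≤ n)
    (𝓛 : Set (Set (FreeMonoid A)))
    (h𝓛 : 𝓛 = {S | ∃ U : Set M, IsUpperSet U ∧ S = φ ⁻¹' U})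
    (L : Set (FreeMonoid A)) (hL : L = φ ⁻¹' P)
    (U : ℕ → Set M)
    (hU : ∀ k, U k = {s | ∃ (x : ℕ → M) (m : ℕ), PChain P x m ∧ k ≤ m ∧ x (m - 1) = s}) :
    L ∈ diffHier 𝓛 n ∧ (∀ k, 1 ≤ k → IsUpperSet (U k)) ∧
    P = partialAlt (fun i => U (i + 1)) n := by
  classical
  have hUmem : ∀ k s, s ∈ U k ↔
      ∃ (x : ℕ → M) (m : ℕ), PChain P x m ∧ k ≤ m ∧ x (m - 1) = s := by
    intro k s; rw [hU]; rfl
  -- antitone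
  have hanti : ∀ k l, k ≤ l → U l ⊆ U k := by
    intro k l hkl s hs
    obtain ⟨x, m, hc, hm, he⟩ := (hUmem l s).1 hs
    exact (hUmem k s).2 ⟨x, m, hc, hkl.trans hm, he⟩
  -- P ⊆ U 1
  have hPU1 : P ⊆ U 1 := by
    intro s hs
    refine (hUmem 1 s).2 ⟨fun _ => s, 1, ⟨Nat.one_pos, ?_, hs, ?_⟩, le_refl _, rfl⟩
    · intro i hi; omega
    · intro i hi him; omega
  -- the key "last element" lemma
  have hdiff : ∀ k s, s ∈ U k → s ∉ U (k + 1) → (s ∈ P ↔ Odd k) := by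
    intro k s hs hs'
    obtain ⟨x, m, hc, hm, he⟩ := (hUmem k s).1 hs
    have hmk : m = k := by
      by_contra hne
      exact hs' ((hUmem (k + 1) s).2 ⟨x, m, hc, by omega, he⟩)
    have h0 : 0 < m := hc.1
    have := pchain_parity hc (m - 1) (by omega)
    rw [he] at this
    rw [this, Nat.even_iff, Nat.odd_iff]
    omega
  -- U k empty for k > n
  have hempty : ∀ k, n < k → U k = ∅ := by
    intro k hk
    ext s
    simp only [Set.mem_empty_iff_false, iff_false]
    intro hs
    obtain ⟨x, m, hc, hm, he⟩ := (hUmem k s).1 hs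
    have := hn x m hc
    omega
  -- an element of P lies in some U (2j+1) \ U (2j+2)
  have hPiff : ∀ s, s ∈ P ↔ ∃ j, s ∈ U (2 * j + 1) ∧ s ∉ U (2 * j + 2) := by
    intro s
    constructor
    · intro hs
      have hex : ∃ k, s ∉ U (k + 1) := ⟨n, by rw [hempty (n + 1) (by omega)]; simp⟩
      set k := Nat.find hex with hkdef
      have h1 : s ∉ U (k + 1) := Nat.find_spec hex
      have hk0 : k ≠ 0 := by
        intro h
        rw [h] at h1
        exact h1 (hPU1 hs)
      have h2 : s ∈ U k := by
        have := Nat.find_min hex (m := k - 1) (by omega)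
        simp only [not_not] at this
        have hkk : k - 1 + 1 = k := by omega
        rwa [hkk] at this
      have hodd : Odd k := (hdiff k s h2 h1).1 hs
      obtain ⟨j, hj⟩ := hodd
      refine ⟨j, ?_, ?_⟩
      · rwa [hj] at h2
      · have : 2 * j + 2 = k + 1 := by omega
        rwa [this]
    · rintro ⟨j, h1, h2⟩
      exact (hdiff (2 * j + 1) s h1 h2).2 ⟨j, by ring⟩
  -- upper sets
  have hupper : ∀ k, IsUpperSet (U k) := by
    intro k s t hst hs
    obtain ⟨x, m, ⟨hm0, hmono, hx0, halt⟩, hkm, hxe⟩ := (hUmem k s).1 hs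
    by_cases hp : (t ∈ P ↔ s ∈ P)
    · -- replace the last element by t
      refine (hUmem k t).2 ⟨fun i => if i = m - 1 then t else x i, m,
        ⟨hm0, ?_, ?_, ?_⟩, hkm, by simp⟩
      · intro i hi
        by_cases h1 : i + 1 = m - 1
        · have hii : ¬ (i = m - 1) := by omega
          simp only [h1, hii, if_true, if_false, if_pos rfl]
          calc x i < x (i + 1) := hmono i hi
            _ = x (m - 1) := by rw [h1]
            _ = s := hxe
            _ ≤ t := hst
        · have hii : ¬ (i = m - 1) := by omega
          simp only [h1, hii, if_false]
          exact hmono i hi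
      · by_cases h0 : (0 : ℕ) = m - 1
        · beta_reduce
          rw [if_pos h0, hp, show s = x 0 from by rw [← hxe, ← h0]]
          exact hx0
        · beta_reduce
          rw [if_neg h0]; exact hx0
      · intro i hi0 him
        by_cases h1 : i = m - 1
        · have h2 : ¬ (i - 1 = m - 1) := by omega
          beta_reduce
          rw [if_pos h1, if_neg h2, hp, ← hxe, ← h1]
          exact halt i hi0 him
        · have h2 : ¬ (i - 1 = m - 1) := by omega
          beta_reduce
          rw [if_neg h1, if_neg h2]
          exact halt i hi0 him
    · -- append t
      have hsne : s ≠ t := by rintro rfl; exact hp Iff.rfl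
      have hst' : s < t := lt_of_le_of_ne hst hsne
      refine (hUmem k t).2 ⟨fun i => if i < m then x i else t, m + 1,
        ⟨by omega, ?_, ?_, ?_⟩, by omega, by simp⟩
      · intro i hi
        by_cases h1 : i + 1 < m
        · simp only [h1, Nat.lt_of_succ_lt h1, if_true]
          exact hmono i h1
        · have h3 : i + 1 = m := by omega
          have hi' : i < m := by omega
          simp only [h1, hi', if_true, if_false]
          have : x i = s := by rw [← hxe]; congr 1; omega
          rw [this]; exact hst'
      · simp only [hm0, if_pos hm0]; exact hx0
      · intro i hi0 him
        by_cases h1 : i < m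
        · have h2 : i - 1 < m := by omega
          simp only [h1, h2, if_true]
          exact halt i hi0 h1
        · have h2 : i - 1 < m := by omega
          simp only [h1, h2, if_true, if_false]
          have : x (i - 1) = s := by rw [← hxe]; congr 1; omega
          rw [this]
          exact (not_iff_comm.mp (not_iff.mp hp)).symm
  refine ⟨?_, fun k _ => hupper k, ?_⟩
  · -- L ∈ diffHier 𝓛 n
    refine ⟨fun i => φ ⁻¹' (U (i + 1)), ?_, ?_, ?_, ?_⟩
    · intro i _
      rw [h𝓛]
      exact ⟨U (i + 1), hupper (i + 1), rfl⟩
    · intro i hi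
      show φ ⁻¹' (U (i + 1)) = ∅
      rw [hempty (i + 1) (by omega)]
      simp
    · intro i j hij
      exact Set.preimage_mono (hanti (i + 1) (j + 1) (by omega))
    · rw [hL]
      ext w
      simp only [Set.mem_preimage, altDiff, Set.mem_iUnion, Set.mem_diff]
      exact hPiff (φ w)
  · -- P = partialAlt
    have hinv : ∀ j, partialAlt (fun i => U (i + 1)) j =
        if Even j then P \ U (j + 1) else (P \ U (j + 1)) ∪ U j := by
      intro j
      induction j with
      | zero =>
        rw [show partialAlt (fun i => U (i + 1)) 0 = ∅ from rfl, if_pos Even.zero]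
        ext s
        simp only [Set.mem_empty_iff_false, Set.mem_diff, false_iff, not_and, not_not]
        intro hs; exact hPU1 hs
      | succ j ih =>
        by_cases hje : Even j
        · have hje1 : ¬ Even (j + 1) := by simp [Nat.even_add_one, hje]
          simp only [partialAlt, hje, hje1, if_true, if_false, ih]
          ext s
          have ha : s ∈ U (j + 2) → s ∈ U (j + 1) := fun h => hanti _ _ (by omega) h
          simp only [Set.mem_union, Set.mem_diff]
          tauto
        · have hje1 : Even (j + 1) := by simp [Nat.even_add_one, hje]
          simp only [partialAlt, hje, hje1, if_true, if_false, ih]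
          ext s
          have ha2 : s ∈ U (j + 2) → s ∈ U (j + 1) := fun h => hanti _ _ (by omega) h
          have ha1 : s ∈ U (j + 1) → s ∈ U j := fun h => hanti _ _ (by omega) h
          have hoj : Odd j := Nat.not_even_iff_odd.mp hje
          have h1 : s ∈ U j → s ∉ U (j + 1) → s ∈ P :=
            fun a b => (hdiff j s a b).2 hoj
          have h2 : s ∈ U (j + 1) → s ∉ U (j + 2) → s ∈ P → False := by
            intro a b c
            have := (hdiff (j + 1) s a b).1 c
            rw [Nat.odd_iff] at this
            rw [Nat.odd_iff] at hoj
            omega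
          simp only [Set.mem_union, Set.mem_diff]
          tauto
    rw [hinv n]
    by_cases hne : Even n
    · rw [if_pos hne, hempty (n + 1) (by omega)]
      simp
    · rw [if_neg hne, hempty (n + 1) (by omega)]
      have hUnP : U n ⊆ P := by
        intro s hs
        have hs' : s ∉ U (n + 1) := by rw [hempty (n + 1) (by omega)]; simp
        exact (hdiff n s hs hs').2 (Nat.not_even_iff_odd.mp hne)
      rw [Set.diff_empty, Set.union_eq_left.mpr hUnP]
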